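/- arXiv:1704.04938 — 3 statements merged into one kernel-verified Lean document; each statement's English description precedes it below -/
import Mathlib

section
/- Suppose f : ℝ → ℝ is locally Lipschitz. Then the map F(u) = -u + J *_ρ (f∘u) + h sends bounded continuous functions to bounded continuous functions, and for every R > 0, if k_R is a Lipschitz constant for f on the interval [-R, R], then for all bounded continuous u, v with ‖u‖_∞ ≤ R and ‖v‖_∞ ≤ R one has ‖F(u) - F(v)‖_∞ ≤ (1 + k_R ‖J‖_{L¹(ℝ^N)} ‖ρ‖_∞) ‖u - v‖_∞. -/
/-! A locally Lipschitz `f` is continuous, so `f ∘ u` is bounded and continuous and so is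
`(f ∘ u) ρ`; convolving it against `J ∈ L¹` gives a bounded continuous function. For the
Lipschitz bound, `J *_ρ` is linear, `f` is `k_R`-Lipschitz on the common range `[-R, R]` of `u`
and `v`, and `|J *_ρ g| ≤ ‖J‖_{L¹} sup |g ρ|` because `J ≥ 0`. -/

open MeasureTheory Real
open scoped Convolution

/-- The weighted convolution `(J *_ρ v)(x) = ∫ J(x-y) v(y) ρ(y) dy` on `ℝ^N`. -/
noncomputable def convW {N : ℕ} (J ρ v : (Fin N → ℝ) → ℝ) (x : Fin N → ℝ) : ℝ :=
  ∫ y, J (x - y) * v y * ρ y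

lemma exists_abs_comp_le_of_abs_le {α : Type*} {f : ℝ → ℝ} (hf : Continuous f)
    {u : α → ℝ} {C : ℝ} (hu : ∀ x, |u x| ≤ C) : ∃ M, ∀ x, |f (u x)| ≤ M := by
  obtain ⟨M, hM⟩ :=
    (isCompact_Icc (a := -C) (b := C)).exists_bound_of_continuousOn hf.continuousOn
  exact ⟨M, fun x => hM (u x) (abs_le.mp (hu x))⟩

lemma abs_mul_le_of_abs_le_of_le {α : Type*} {g ρ : α → ℝ} {C P : ℝ}
    (hg : ∀ y, |g y| ≤ C) (hρ₀ : ∀ y, 0 ≤ ρ y) (hρP : ∀ y, ρ y ≤ P) (y : α) :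
    |g y * ρ y| ≤ C * P := by
  rw [abs_mul, abs_of_nonneg (hρ₀ y)]
  exact mul_le_mul (hg y) (hρP y) (hρ₀ y) ((abs_nonneg _).trans (hg y))

lemma nonneg_of_abs_sub_le_mul_abs_sub_on_Icc {f : ℝ → ℝ} {R k : ℝ} (hR : 0 < R)
    (hk : ∀ a ∈ Set.Icc (-R) R, ∀ b ∈ Set.Icc (-R) R, |f a - f b| ≤ k * |a - b|) : 0 ≤ k := by
  have := hk R ⟨by linarith, le_rfl⟩ (-R) ⟨le_rfl, by linarith⟩
  rw [abs_of_pos (by linarith : 0 < R - -R)] at this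
  nlinarith [abs_nonneg (f R - f (-R))]

section convW

variable {N : ℕ} {J ρ : (Fin N → ℝ) → ℝ}

lemma convW_eq_convolution (J ρ v : (Fin N → ℝ) → ℝ) :
    convW J ρ v = J ⋆[ContinuousLinearMap.lsmul ℝ ℝ] fun y => v y * ρ y := by
  funext x
  simp [convolution_lsmul_swap, convW, mul_assoc]

lemma continuous_convW (hJ : Integrable J) (hρ : Continuous ρ) {g : (Fin N → ℝ) → ℝ}
    (hg : Continuous g) {B : ℝ} (hB : ∀ y, |g y * ρ y| ≤ B) : Continuous (convW J ρ g) := by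
  rw [convW_eq_convolution]
  exact BddAbove.continuous_convolution_right_of_integrable _
    ⟨B, by rintro _ ⟨y, rfl⟩; exact hB y⟩ hJ (hg.mul hρ)

lemma integrable_convW_integrand (hJ : Integrable J) (hρ : Continuous ρ)
    {g : (Fin N → ℝ) → ℝ} (hg : Continuous g) {B : ℝ} (hB : ∀ y, |g y * ρ y| ≤ B)
    (x : Fin N → ℝ) : Integrable fun y => J (x - y) * g y * ρ y := by
  simpa only [mul_assoc] using (hJ.comp_sub_left x).mul_bdd
    (g := fun y => g y * ρ y) (hg.mul hρ).aestronglyMeasurable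
    (ae_of_all _ hB)

lemma convW_sub (hJ : Integrable J) (hρ : Continuous ρ) {g₁ g₂ : (Fin N → ℝ) → ℝ}
    (hg₁ : Continuous g₁) (hg₂ : Continuous g₂) {B₁ B₂ : ℝ} (hB₁ : ∀ y, |g₁ y * ρ y| ≤ B₁)
    (hB₂ : ∀ y, |g₂ y * ρ y| ≤ B₂) (x : Fin N → ℝ) :
    convW J ρ (fun y => g₁ y - g₂ y) x = convW J ρ g₁ x - convW J ρ g₂ x := by
  simp only [convW, ← integral_sub (integrable_convW_integrand hJ hρ hg₁ hB₁ x)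
    (integrable_convW_integrand hJ hρ hg₂ hB₂ x)]
  congr 1 with y
  ring

lemma abs_convW_le (hJ : Integrable J) (hJ₀ : ∀ x, 0 ≤ J x) {g : (Fin N → ℝ) → ℝ} {B : ℝ}
    (hB : ∀ y, |g y * ρ y| ≤ B) (x : Fin N → ℝ) : |convW J ρ g x| ≤ (∫ y, J y) * B := by
  calc |convW J ρ g x| ≤ ∫ y, J (x - y) * B := by
        refine norm_integral_le_of_norm_le (f := fun y => J (x - y) * g y * ρ y)
          ((hJ.comp_sub_left x).mul_const B)
          (ae_of_all _ fun y => ?_)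
        rw [Real.norm_eq_abs, mul_assoc, abs_mul, abs_of_nonneg (hJ₀ _)]
        exact mul_le_mul_of_nonneg_left (hB y) (hJ₀ _)
    _ = (∫ y, J y) * B := by rw [integral_mul_const, integral_sub_left_eq_self]

lemma abs_convW_comp_sub_convW_comp_le (hJ : Integrable J) (hJ₀ : ∀ x, 0 ≤ J x)
    (hρ : Continuous ρ) (hρ₀ : ∀ y, 0 ≤ ρ y) {P : ℝ} (hρP : ∀ y, ρ y ≤ P)
    {f : ℝ → ℝ} (hf : Continuous f) {R k : ℝ} (hk₀ : 0 ≤ k)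
    (hk : ∀ a ∈ Set.Icc (-R) R, ∀ b ∈ Set.Icc (-R) R, |f a - f b| ≤ k * |a - b|)
    {u v : (Fin N → ℝ) → ℝ} (hu : Continuous u) (hv : Continuous v)
    (huR : ∀ x, |u x| ≤ R) (hvR : ∀ x, |v x| ≤ R) {S : ℝ} (hS : ∀ y, |u y - v y| ≤ S)
    (x : Fin N → ℝ) :
    |convW J ρ (fun y => f (u y)) x - convW J ρ (fun y => f (v y)) x| ≤
      (∫ y, J y) * (k * S * P) := by
  have hfuv : ∀ y, |f (u y) - f (v y)| ≤ k * S := fun y =>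
    (hk _ (abs_le.mp (huR y)) _ (abs_le.mp (hvR y))).trans
      (mul_le_mul_of_nonneg_left (hS y) hk₀)
  obtain ⟨Mu, hMu⟩ := exists_abs_comp_le_of_abs_le hf huR
  obtain ⟨Mv, hMv⟩ := exists_abs_comp_le_of_abs_le hf hvR
  rw [← convW_sub hJ hρ (g₁ := fun y => f (u y)) (g₂ := fun y => f (v y))
    (hf.comp hu) (hf.comp hv)
    (abs_mul_le_of_abs_le_of_le hMu hρ₀ hρP) (abs_mul_le_of_abs_le_of_le hMv hρ₀ hρP)]
  exact abs_convW_le hJ hJ₀ (abs_mul_le_of_abs_le_of_le hfuv hρ₀ hρP) x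

end convW

theorem F_maps_Cb_and_lipschitz_on_balls_general {N : ℕ}
    (J ρ h : (Fin N → ℝ) → ℝ)
    (hJint : Integrable J) (hJpos : ∀ x, 0 ≤ J x)
    (hρcont : Continuous ρ) (hρpos : ∀ x, 0 ≤ ρ x)
    (hρbdd : BddAbove (Set.range ρ))
    (hhcont : Continuous h) (hhbdd : ∃ C, ∀ x, |h x| ≤ C)
    (f : ℝ → ℝ) (hf : LocallyLipschitz f) :
    (∀ u : (Fin N → ℝ) → ℝ, Continuous u → (∃ C, ∀ x, |u x| ≤ C) →
        Continuous (fun x => -u x + convW J ρ (fun y => f (u y)) x + h x) ∧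
        ∃ C, ∀ x, |(-u x + convW J ρ (fun y => f (u y)) x + h x)| ≤ C) ∧
    (∀ R : ℝ, 0 < R → ∀ kR : ℝ,
      (∀ a ∈ Set.Icc (-R) R, ∀ b ∈ Set.Icc (-R) R, |f a - f b| ≤ kR * |a - b|) →
      ∀ u v : (Fin N → ℝ) → ℝ, Continuous u → Continuous v →
        (∀ x, |u x| ≤ R) → (∀ x, |v x| ≤ R) →
        ∀ x, |(-u x + convW J ρ (fun y => f (u y)) x + h x) -
              (-v x + convW J ρ (fun y => f (v y)) x + h x)| ≤
            (1 + kR * (∫ y, J y) * (⨆ z, ρ z)) * (⨆ z, |u z - v z|)) := by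
  have hfc : Continuous f := hf.continuous
  have hρP : ∀ y, ρ y ≤ ⨆ z, ρ z := le_ciSup hρbdd
  refine ⟨fun u hu ⟨Cu, hCu⟩ => ?_, fun R hR kR hk u v hu hv huR hvR x => ?_⟩
  · obtain ⟨M, hM⟩ := exists_abs_comp_le_of_abs_le hfc hCu
    have hB := abs_mul_le_of_abs_le_of_le hM hρpos hρP
    obtain ⟨Ch, hCh⟩ := hhbdd
    refine ⟨(hu.neg.add (continuous_convW hJint hρcont (hfc.comp hu) hB)).add hhcont,
      Cu + (∫ y, J y) * (M * ⨆ z, ρ z) + Ch, fun x => ?_⟩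
    have := abs_convW_le hJint hJpos hB x
    have := abs_add_three (-u x) (convW J ρ (fun y => f (u y)) x) (h x)
    linarith [hCu x, hCh x, abs_neg (u x)]
  · set S := ⨆ z, |u z - v z|
    have hS : ∀ z, |u z - v z| ≤ S := le_ciSup ⟨2 * R, by
      rintro _ ⟨z, rfl⟩
      linarith [abs_sub (u z) (v z), huR z, hvR z]⟩
    have hconv := abs_convW_comp_sub_convW_comp_le hJint hJpos hρcont hρpos hρP hfc
      (nonneg_of_abs_sub_le_mul_abs_sub_on_Icc hR hk) hk hu hv huR hvR hS x
    set cu := convW J ρ (fun y => f (u y)) x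
    set cv := convW J ρ (fun y => f (v y)) x
    calc |(-u x + cu + h x) - (-v x + cv + h x)| = |(v x - u x) + (cu - cv)| := by
          congr 1; ring
      _ ≤ |u x - v x| + |cu - cv| := by rw [abs_sub_comm (u x)]; exact abs_add_le _ _
      _ ≤ S + (∫ y, J y) * (kR * S * ⨆ z, ρ z) := add_le_add (hS x) hconv
      _ = _ := by ring

/-- if `f` is locally Lipschitz, then `F(u) = -u + J *_ρ (f∘u) + h` maps
bounded continuous functions to bounded continuous functions, and is Lipschitz on balls:
if `k_R` is a Lipschitz constant for `f` on `[-R,R]` then for `‖u‖_∞, ‖v‖_∞ ≤ R`,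
`‖F(u) - F(v)‖_∞ ≤ (1 + k_R ‖J‖_{L¹} ‖ρ‖_∞) ‖u - v‖_∞`. -/
theorem F_maps_Cb_and_lipschitz_on_balls {N : ℕ} (hN : 1 ≤ N)
    (J ρ h : (Fin N → ℝ) → ℝ)
    (hJint : Integrable J) (hJpos : ∀ x, 0 ≤ J x)
    (hρcont : Continuous ρ) (hρpos : ∀ x, 0 ≤ ρ x)
    (hρbdd : BddAbove (Set.range ρ)) (hρint : Integrable ρ)
    (hhcont : Continuous h) (hhbdd : ∃ C, ∀ x, |h x| ≤ C)
    (f : ℝ → ℝ) (hf : LocallyLipschitz f) :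
    (∀ u : (Fin N → ℝ) → ℝ, Continuous u → (∃ C, ∀ x, |u x| ≤ C) →
        Continuous (fun x => -u x + convW J ρ (fun y => f (u y)) x + h x) ∧
        ∃ C, ∀ x, |(-u x + convW J ρ (fun y => f (u y)) x + h x)| ≤ C) ∧
    (∀ R : ℝ, 0 < R → ∀ kR : ℝ,
      (∀ a ∈ Set.Icc (-R) R, ∀ b ∈ Set.Icc (-R) R, |f a - f b| ≤ kR * |a - b|) →
      ∀ u v : (Fin N → ℝ) → ℝ, Continuous u → Continuous v →
        (∀ x, |u x| ≤ R) → (∀ x, |v x| ≤ R) →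
        ∀ x, |(-u x + convW J ρ (fun y => f (u y)) x + h x) -
              (-v x + convW J ρ (fun y => f (v y)) x + h x)| ≤
            (1 + kR * (∫ y, J y) * (⨆ z, ρ z)) * (⨆ z, |u z - v z|)) :=
  F_maps_Cb_and_lipschitz_on_balls_general J ρ h hJint hJpos hρcont hρpos hρbdd hhcont hhbdd f hf
end

section
/- Suppose ρ : ℝ^N → ℝ is continuous, nonnegative, bounded, and tends to 0 as ‖x‖ → ∞. Then for every R > 0 the set { x ↦ u(x)·ρ(x) : u ∈ C¹(ℝ^N, ℝ), ‖u‖_∞ ≤ R and ‖Du(x)‖ ≤ R for all x } is totally bounded in the space of bounded continuous functions ℝ^N → ℝ with the supremum metric; i.e. the inclusion of C_b¹(ℝ^N) into C_ρ(ℝ^N) is a compact map. -/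
/-!
The products `u * ρ` are dominated by `R * |ρ|`, which is small off some compact set `K`, and they
are equicontinuous, since the `u` are uniformly bounded and `R`-Lipschitz by the mean value theorem
while `ρ` is continuous. By Arzelà–Ascoli their restrictions to `K` form a totally bounded set, and
two of them whose restrictions to `K` are close are close everywhere, because off `K` both are small.
-/

open Filter Topology Set NNReal BoundedContinuousFunction

theorem Metric.totallyBounded_of_forall_totallyBounded_image {ι X : Type*} {Y : ι → Type*}
    [PseudoMetricSpace X] [∀ i, PseudoMetricSpace (Y i)] (φ : ∀ i, X → Y i) {s : Set X}
    (h : ∀ ε > 0, ∃ i, ∃ δ > 0, TotallyBounded (φ i '' s) ∧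
      ∀ x ∈ s, ∀ y ∈ s, dist (φ i x) (φ i y) < δ → dist x y < ε) :
    TotallyBounded s := by
  refine Metric.totallyBounded_iff.2 fun ε hε => ?_
  obtain ⟨i, δ, hδ, himage, hclose⟩ := h ε hε
  obtain ⟨t, hts, htfin, hcover⟩ := Metric.finite_approx_of_totallyBounded himage δ hδ
  obtain ⟨c, hcs, hcfin, hcover⟩ :=
    exists_subset_image_finite_and (p := fun t => φ i '' s ⊆ ⋃ y ∈ t, ball y δ) |>.1
      ⟨t, hts, htfin, hcover⟩
  refine ⟨c, hcfin, fun x hx => ?_⟩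
  obtain ⟨y, hyc, hxy⟩ := mem_iUnion₂.1 (biUnion_image ▸ hcover (mem_image_of_mem (φ i) hx))
  exact mem_iUnion₂.2 ⟨y, hyc, hclose x hx y (hcs hyc) hxy⟩

theorem EquicontinuousAt.mul_continuousAt {ι X 𝕜 : Type*} [TopologicalSpace X] [NormedRing 𝕜]
    {u : ι → X → 𝕜} {ρ : X → 𝕜} {x₀ : X} {C : ℝ} (hu : EquicontinuousAt u x₀)
    (hC : ∀ i x, ‖u i x‖ ≤ C) (hρ : ContinuousAt ρ x₀) :
    EquicontinuousAt (fun i x => u i x * ρ x) x₀ := by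
  rw [Metric.equicontinuousAt_iff_right] at hu ⊢
  intro ε hε
  set M := max C 0 + ‖ρ x₀‖ + 1
  have hM : 0 < M := by positivity
  have hδ : 0 < ε / (2 * M) := by positivity
  filter_upwards [hu _ hδ, Metric.tendsto_nhds.1 hρ _ hδ] with x hux hρx i
  have hsplit : u i x₀ * ρ x₀ - u i x * ρ x = (u i x₀ - u i x) * ρ x₀ + u i x * (ρ x₀ - ρ x) := by
    noncomm_ring
  rw [dist_eq_norm, hsplit]
  simp only [dist_eq_norm] at hux hρx
  have h1 : ‖(u i x₀ - u i x) * ρ x₀‖ ≤ ε / (2 * M) * ‖ρ x₀‖ :=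
    (norm_mul_le _ _).trans (mul_le_mul_of_nonneg_right (hux i).le (norm_nonneg _))
  have h2 : ‖u i x * (ρ x₀ - ρ x)‖ ≤ max C 0 * (ε / (2 * M)) := by
    refine (norm_mul_le _ _).trans (mul_le_mul ((hC i x).trans (le_max_left _ _)) ?_
      (norm_nonneg _) (le_max_right _ _))
    rw [norm_sub_rev]; exact hρx.le
  calc ‖(u i x₀ - u i x) * ρ x₀ + u i x * (ρ x₀ - ρ x)‖
      ≤ ε / (2 * M) * ‖ρ x₀‖ + max C 0 * (ε / (2 * M)) := (norm_add_le _ _).trans (add_le_add h1 h2)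
    _ = ε / (2 * M) * (M - 1) := by simp only [M]; ring
    _ < ε / (2 * M) * M := by gcongr; linarith
    _ = ε / 2 := by field_simp
    _ < ε := by linarith

theorem Equicontinuous.mul_continuous {ι X 𝕜 : Type*} [TopologicalSpace X] [NormedRing 𝕜]
    {u : ι → X → 𝕜} {ρ : X → 𝕜} {C : ℝ} (hu : Equicontinuous u) (hC : ∀ i x, ‖u i x‖ ≤ C)
    (hρ : Continuous ρ) : Equicontinuous (fun i x => u i x * ρ x) :=
  fun x₀ => (hu x₀).mul_continuousAt hC hρ.continuousAt

namespace BoundedContinuousFunction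

theorem equicontinuous_domRestrict_image {α E : Type*} [TopologicalSpace α] [PseudoMetricSpace E]
    {A : Set (α →ᵇ E)} (hA : Equicontinuous ((↑) : A → α → E)) (K : Set α) :
    Equicontinuous ((↑) : (fun f : α →ᵇ E => f.domRestrict K) '' A → K → E) := by
  have hK : Equicontinuous (K.domRestrict ∘ ((↑) : A → α → E)) :=
    (equicontinuous_restrict_iff _).2 (hA.equicontinuousOn K)
  convert hK.comp (fun f : (fun f : α →ᵇ E => f.domRestrict K) '' A =>
    (⟨f.2.choose, f.2.choose_spec.1⟩ : A)) using 1
  funext f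
  conv_lhs => rw [← f.2.choose_spec.2]
  rfl

theorem totallyBounded_of_equicontinuous_of_norm_le {α E : Type*} [TopologicalSpace α]
    [NormedAddCommGroup E] [ProperSpace E] {A : Set (α →ᵇ E)} {g : α → ℝ} (hg : Continuous g)
    (hg0 : Tendsto g (cocompact α) (𝓝 0)) (hA : ∀ f ∈ A, ∀ x, ‖f x‖ ≤ g x)
    (hequi : Equicontinuous ((↑) : A → α → E)) :
    TotallyBounded A := by
  refine Metric.totallyBounded_of_forall_totallyBounded_image
    (fun (K : Set α) (f : α →ᵇ E) => f.domRestrict K) fun ε hε => ?_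
  obtain ⟨K, hK, hsmall⟩ := mem_cocompact.1 (hg0 (Iio_mem_nhds (by positivity : 0 < ε / 3)))
  have : CompactSpace K := isCompact_iff_compactSpace.1 hK
  obtain ⟨C, hC⟩ := hK.exists_bound_of_continuousOn hg.continuousOn
  refine ⟨K, ε / 3, by positivity, ?_, fun f hf f' hf' hff' => ?_⟩
  · refine (arzela_ascoli (Metric.closedBall 0 C) (isCompact_closedBall _ _) _ ?_
      (equicontinuous_domRestrict_image hequi K)).totallyBounded.subset subset_closure
    rintro _ x ⟨f, hf, rfl⟩
    exact mem_closedBall_zero_iff.2 ((hA f hf x).trans ((Real.le_norm_self _).trans (hC x x.2)))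
  refine ((dist_le (by positivity)).2 fun x => ?_).trans_lt (by linarith : 2 * ε / 3 < ε)
  by_cases hx : x ∈ K
  · have hfK : dist (f.domRestrict K) (f'.domRestrict K) < ε / 3 := hff'
    calc dist (f x) (f' x) ≤ dist (f.domRestrict K) (f'.domRestrict K) :=
          dist_coe_le_dist (f := f.domRestrict K) (g := f'.domRestrict K) ⟨x, hx⟩
      _ ≤ 2 * ε / 3 := by linarith
  · have hgx : g x < ε / 3 := hsmall hx
    calc dist (f x) (f' x) ≤ ‖f x‖ + ‖f' x‖ := dist_le_norm_add_norm _ _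
      _ ≤ 2 * ε / 3 := by linarith [hA f hf x, hA f' hf' x]

theorem equicontinuous_of_eq_bounded_lipschitz_mul {X 𝕜 : Type*}
    [PseudoMetricSpace X] [NormedRing 𝕜] {A : Set (X →ᵇ 𝕜)} {ρ : X → 𝕜} {K : ℝ≥0} {C : ℝ}
    (hρ : Continuous ρ)
    (hA : ∀ w ∈ A, ∃ u : X → 𝕜, LipschitzWith K u ∧ (∀ x, ‖u x‖ ≤ C) ∧ ∀ x, w x = u x * ρ x) :
    Equicontinuous ((↑) : A → X → 𝕜) := by
  choose u hlip hbound hw using fun w : A => hA w w.2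
  have hprod : ((↑) : A → X → 𝕜) = fun w x => u w x * ρ x := funext fun w => funext (hw w)
  rw [hprod]
  exact (LipschitzWith.uniformEquicontinuous u K hlip).equicontinuous.mul_continuous hbound hρ

end BoundedContinuousFunction

theorem inclusion_Cb1_Crho_compact_general {N : ℕ}
    (ρ : (Fin N → ℝ) → ℝ)
    (hρcont : Continuous ρ)
    (hρzero : Filter.Tendsto ρ (Filter.cocompact (Fin N → ℝ)) (nhds 0))
    (R : ℝ) :
    TotallyBounded { w : (Fin N → ℝ) →ᵇ ℝ | ∃ u : (Fin N → ℝ) → ℝ,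
      ContDiff ℝ 1 u ∧ (∀ x, |u x| ≤ R) ∧ (∀ x, ‖fderiv ℝ u x‖ ≤ R) ∧
      ∀ x, w x = u x * ρ x } := by
  refine totallyBounded_of_equicontinuous_of_norm_le (g := fun x => R * |ρ x|) (by fun_prop)
    (by simpa using hρzero.abs.const_mul R) ?_
    (equicontinuous_of_eq_bounded_lipschitz_mul (K := R.toNNReal) (C := R) hρcont ?_)
  · rintro w ⟨u, -, hu, -, hw⟩ x
    rw [hw, norm_mul, Real.norm_eq_abs, Real.norm_eq_abs]
    exact mul_le_mul_of_nonneg_right (hu x) (abs_nonneg _)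
  · rintro w ⟨u, hu, hbound, hDu, hw⟩
    refine ⟨u, ?_, hbound, hw⟩
    exact lipschitzWith_of_nnnorm_fderiv_le (hu.differentiable one_ne_zero)
      fun x => by rw [← norm_toNNReal]; exact Real.toNNReal_le_toNNReal (hDu x)

/-- if `ρ` is continuous, nonnegative, bounded and tends to `0` at
infinity, then for each `R > 0` the set of products `u·ρ`, where `u` ranges over `C¹`
functions with `‖u‖_∞ ≤ R` and `‖Du‖_∞ ≤ R`, is totally bounded in the sup metric;
i.e. the inclusion `C_b¹(ℝ^N) ↪ C_ρ(ℝ^N)` is compact. -/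
theorem inclusion_Cb1_Crho_compact {N : ℕ} (hN : 1 ≤ N)
    (ρ : (Fin N → ℝ) → ℝ)
    (hρcont : Continuous ρ) (hρpos : ∀ x, 0 ≤ ρ x)
    (hρbdd : BddAbove (Set.range ρ))
    (hρzero : Filter.Tendsto ρ (Filter.cocompact (Fin N → ℝ)) (nhds 0))
    (R : ℝ) (hR : 0 < R) :
    TotallyBounded { w : (Fin N → ℝ) →ᵇ ℝ | ∃ u : (Fin N → ℝ) → ℝ,
      ContDiff ℝ 1 u ∧ (∀ x, |u x| ≤ R) ∧ (∀ x, ‖fderiv ℝ u x‖ ≤ R) ∧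
      ∀ x, w x = u x * ρ x } :=
  inclusion_Cb1_Crho_compact_general ρ hρcont hρzero R
end

section
/- Let N = 1 and suppose f : ℝ → ℝ is continuous and bounded with M := sup_x |f(x)|, J : ℝ → ℝ is nonnegative, continuously differentiable, with J and J' integrable, and h : ℝ → ℝ is continuously differentiable with h' bounded. Let u : ℝ × [0,∞) → ℝ be continuous. Then for each t ≥ 0 the Duhamel term v(x,t) = ∫₀^t e^{s-t} [(J *_ρ (f∘u(·,s)))(x) + h(x)] ds is differentiable in x and |∂_x v(x,t)| ≤ M ‖J'‖_{L¹(ℝ)} ‖ρ‖_∞ + ‖h'‖_∞ for all x ∈ ℝ and t ≥ 0. -/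
/-!
Swapping the time and space integrals (Fubini, justified by a uniform `L¹` bound on the
integrand) writes the Duhamel term as `J ⋆ w + (1 - e^{-t}) h` with the weight
`w(y) = ∫₀^t e^{s-t} f(u(y,s)) ρ(y) ds`, which is continuous and bounded by `M ‖ρ‖_∞`.
A convolution `J ⋆ w` with `J, J'` integrable and `w` bounded continuous has derivative `J' ⋆ w`:
integrating `J'` over `[a, b]` and swapping the integrals once more gives
`(J ⋆ w)(b) - (J ⋆ w)(a) = ∫_a^b (J' ⋆ w)`, and `J' ⋆ w` is continuous. The bound follows from
`|J' ⋆ w| ≤ ‖J'‖₁ ‖w‖_∞` and `0 ≤ 1 - e^{-t} ≤ 1`.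
-/

open MeasureTheory Real

/-- The weighted convolution `(J *_ρ v)(x) = ∫ J(x-y) v(y) ρ(y) dy` on `ℝ`. -/
noncomputable def convW1 (J ρ v : ℝ → ℝ) (x : ℝ) : ℝ :=
  ∫ y, J (x - y) * v y * ρ y

open Set Topology Function ContinuousLinearMap
open scoped Convolution

theorem integral_integral_swap_of_integral_norm_le {α β E : Type*} [MeasurableSpace α]
    [MeasurableSpace β] {μ : Measure α} {ν : Measure β} [SFinite μ] [SFinite ν]
    [NormedAddCommGroup E] [NormedSpace ℝ E] {F : α → β → E}
    (hF : AEStronglyMeasurable (uncurry F) (μ.prod ν)) (hFint : ∀ᵐ x ∂μ, Integrable (F x) ν)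
    {G : α → ℝ} (hG : Integrable G μ) (hFG : ∀ᵐ x ∂μ, ∫ y, ‖F x y‖ ∂ν ≤ G x) :
    ∫ x, ∫ y, F x y ∂ν ∂μ = ∫ y, ∫ x, F x y ∂μ ∂ν := by
  refine integral_integral_swap
    ((integrable_prod_iff hF).2 ⟨hFint, hG.mono' hF.norm.integral_prod_right' ?_⟩)
  filter_upwards [hFG] with x hx
  rwa [norm_of_nonneg (integral_nonneg fun _ => norm_nonneg _)]

section Convolution

variable {g w : ℝ → ℝ} {C : ℝ}

theorem integrable_sub_mul (hg : Integrable g) (hw : AEStronglyMeasurable w)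
    (hwC : ∀ y, |w y| ≤ C) (x : ℝ) : Integrable fun y => g (x - y) * w y :=
  (hg.comp_sub_left x).mul_bdd hw (ae_of_all _ hwC)

theorem integral_abs_sub_mul_le (hg : Integrable g) (hw : AEStronglyMeasurable w)
    (hwC : ∀ y, |w y| ≤ C) (x : ℝ) : ∫ y, |g (x - y) * w y| ≤ (∫ y, |g y|) * C := by
  calc ∫ y, |g (x - y) * w y| ≤ ∫ y, |g (x - y)| * C := by
        refine integral_mono (integrable_sub_mul hg hw hwC x).abs
          ((hg.comp_sub_left x).abs.mul_const C) fun y => ?_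
        rw [abs_mul]
        exact mul_le_mul_of_nonneg_left (hwC y) (abs_nonneg _)
    _ = (∫ y, |g y|) * C := by
        rw [integral_mul_const, integral_sub_left_eq_self (fun y => |g y|)]

theorem abs_convolution_mul_le (hg : Integrable g) (hw : AEStronglyMeasurable w)
    (hwC : ∀ y, |w y| ≤ C) (x : ℝ) :
    |(g ⋆[mul ℝ ℝ] w) x| ≤ (∫ y, |g y|) * C := by
  rw [convolution_mul_swap]
  exact abs_integral_le_integral_abs.trans (integral_abs_sub_mul_le hg hw hwC x)

theorem convolution_mul_sub_eq_intervalIntegral (hg : Differentiable ℝ g) (hgi : Integrable g)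
    (hg'i : Integrable (deriv g)) (hw : AEStronglyMeasurable w) (hwC : ∀ y, |w y| ≤ C)
    {a b : ℝ} (hab : a ≤ b) :
    (g ⋆[mul ℝ ℝ] w) b - (g ⋆[mul ℝ ℝ] w) a = ∫ τ in a..b, (deriv g ⋆[mul ℝ ℝ] w) τ := by
  have hmeas : AEStronglyMeasurable (uncurry fun τ y => deriv g (τ - y) * w y)
      ((volume.restrict (Ioc a b)).prod volume) :=
    ((measurable_deriv g).comp (measurable_fst.sub measurable_snd)).aestronglyMeasurable.mul
      hw.comp_snd
  simp only [convolution_mul_swap]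
  rw [intervalIntegral.integral_of_le hab,
    integral_integral_swap_of_integral_norm_le hmeas
      (ae_of_all _ fun τ => integrable_sub_mul hg'i hw hwC τ) (integrable_const _)
      (ae_of_all _ fun τ => integral_abs_sub_mul_le hg'i hw hwC τ),
    ← integral_sub (integrable_sub_mul hgi hw hwC b) (integrable_sub_mul hgi hw hwC a)]
  congr 1 with y
  rw [integral_mul_const, ← intervalIntegral.integral_of_le hab,
    intervalIntegral.integral_comp_sub_right (deriv g),
    intervalIntegral.integral_deriv_eq_sub (fun z _ => hg z) hg'i.intervalIntegrable, sub_mul]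

theorem hasDerivAt_convolution_mul (hg : Differentiable ℝ g) (hgi : Integrable g)
    (hg'i : Integrable (deriv g)) (hw : Continuous w) (hwC : ∀ y, |w y| ≤ C) (x : ℝ) :
    HasDerivAt (g ⋆[mul ℝ ℝ] w) ((deriv g ⋆[mul ℝ ℝ] w) x) x := by
  have hψ : Continuous (deriv g ⋆[mul ℝ ℝ] w) :=
    BddAbove.continuous_convolution_right_of_integrable _
      ⟨C, by rintro _ ⟨y, rfl⟩; exact hwC y⟩ hg'i hw
  have hFTC : (g ⋆[mul ℝ ℝ] w) =ᶠ[𝓝 x] fun z =>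
      (g ⋆[mul ℝ ℝ] w) (x - 1) + ∫ τ in (x - 1)..z, (deriv g ⋆[mul ℝ ℝ] w) τ := by
    filter_upwards [Ioi_mem_nhds (sub_one_lt x)] with z hz
    rw [← convolution_mul_sub_eq_intervalIntegral hg hgi hg'i hw.aestronglyMeasurable hwC
      hz.le]
    ring
  exact ((intervalIntegral.integral_hasDerivAt_right (hψ.intervalIntegrable _ _)
    (hψ.stronglyMeasurableAtFilter _ _) hψ.continuousAt).const_add _).congr_of_eventuallyEq hFTC

end Convolution

section ParametricConvolution

variable {g φ : ℝ → ℝ} {k : ℝ → ℝ → ℝ} {C : ℝ}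

theorem convW1_eq_convolution_mul (J ρ v : ℝ → ℝ) (x : ℝ) :
    convW1 J ρ v x = (J ⋆[mul ℝ ℝ] fun y => v y * ρ y) x := by
  simp only [convW1, convolution_mul_swap, mul_assoc]

theorem continuous_convolution_mul_param (hg : Integrable g) (hk : Continuous (uncurry k))
    (hkC : ∀ s y, |k s y| ≤ C) (x : ℝ) :
    Continuous fun s => (g ⋆[mul ℝ ℝ] k s) x := by
  simp only [convolution_mul_swap]
  refine continuous_of_dominated (bound := fun y => |g (x - y)| * C)
    (fun s => (integrable_sub_mul hg (hk.uncurry_left s).aestronglyMeasurable (hkC s) x).1)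
    (fun s => ae_of_all _ fun y => ?_) ((hg.comp_sub_left x).abs.mul_const C)
    (ae_of_all _ fun y => continuous_const.mul (hk.uncurry_right y))
  rw [norm_mul, Real.norm_eq_abs, Real.norm_eq_abs]
  exact mul_le_mul_of_nonneg_left (hkC s y) (abs_nonneg _)

theorem intervalIntegral_mul_convolution_mul_param (hg : Integrable g)
    (hk : Continuous (uncurry k)) (hkC : ∀ s y, |k s y| ≤ C) (hφ : Continuous φ)
    {a b : ℝ} (hab : a ≤ b) (x : ℝ) :
    ∫ s in a..b, φ s * (g ⋆[mul ℝ ℝ] k s) x =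
      (g ⋆[mul ℝ ℝ] fun y => ∫ s in a..b, φ s * k s y) x := by
  have hφk : Continuous (uncurry fun s y => φ s * k s y) := (hφ.comp continuous_fst).mul hk
  have hφkC : ∀ s y, |φ s * k s y| ≤ |φ s| * C := fun s y => by
    rw [abs_mul]; exact mul_le_mul_of_nonneg_left (hkC s y) (abs_nonneg _)
  have hmeas : AEStronglyMeasurable (uncurry fun s y => g (x - y) * (φ s * k s y))
      ((volume.restrict (Ioc a b)).prod volume) :=
    (hg.comp_sub_left x).aestronglyMeasurable.comp_snd.mul hφk.aestronglyMeasurable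
  simp only [convolution_mul_swap, ← integral_const_mul, mul_left_comm (φ _)]
  rw [intervalIntegral.integral_of_le hab,
    integral_integral_swap_of_integral_norm_le hmeas
      (ae_of_all _ fun s => integrable_sub_mul hg (hφk.uncurry_left s).aestronglyMeasurable
        (hφkC s) x)
      ((hφ.abs.integrableOn_Ioc.mul_const C).const_mul (∫ y, |g y|))
      (ae_of_all _ fun s => integral_abs_sub_mul_le hg
        (hφk.uncurry_left s).aestronglyMeasurable (hφkC s) x)]
  simp only [integral_const_mul, intervalIntegral.integral_of_le hab]

end ParametricConvolution

theorem integral_exp_sub (t : ℝ) : ∫ s in (0 : ℝ)..t, exp (s - t) = 1 - exp (-t) := by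
  rw [intervalIntegral.integral_comp_sub_right exp t, integral_exp, zero_sub, sub_self, exp_zero]

theorem abs_one_sub_exp_neg_le_one {t : ℝ} (ht : 0 ≤ t) : |1 - exp (-t)| ≤ 1 := by
  have : exp (-t) ≤ 1 := exp_le_one_iff.2 (neg_nonpos.2 ht)
  rw [abs_le]
  constructor <;> linarith [exp_pos (-t)]

theorem abs_intervalIntegral_exp_sub_mul_le {g : ℝ → ℝ} {M t : ℝ} (ht : 0 ≤ t)
    (hgM : ∀ s, |g s| ≤ M) : |∫ s in (0 : ℝ)..t, exp (s - t) * g s| ≤ M :=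
  calc |∫ s in (0 : ℝ)..t, exp (s - t) * g s| ≤ ∫ s in (0 : ℝ)..t, exp (s - t) * M :=
        intervalIntegral.norm_integral_le_of_norm_le ht (f := fun s => exp (s - t) * g s)
          (ae_of_all _ fun s _ => by
            rw [Real.norm_eq_abs, abs_mul, abs_exp]
            exact mul_le_mul_of_nonneg_left (hgM s) (exp_pos _).le)
          ((by fun_prop : Continuous fun s => exp (s - t) * M).intervalIntegrable _ _)
    _ = (1 - exp (-t)) * M := by rw [intervalIntegral.integral_mul_const, integral_exp_sub]
    _ ≤ M := by
        have hM : 0 ≤ M := (abs_nonneg _).trans (hgM 0)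
        nlinarith [exp_pos (-t)]

theorem duhamel_term_derivative_bounded_general
    (J ρ h : ℝ → ℝ)
    (hJ1 : ContDiff ℝ 1 J) (hJint : Integrable J)
    (hJ'int : Integrable (deriv J))
    (hρcont : Continuous ρ) (hρpos : ∀ x, 0 ≤ ρ x)
    (hρbdd : BddAbove (Set.range ρ))
    (hh1 : ContDiff ℝ 1 h)
    (hh'bdd : BddAbove (Set.range fun x => |deriv h x|))
    (f : ℝ → ℝ) (hfc : Continuous f)
    (hfbdd : BddAbove (Set.range fun y => |f y|))
    (u : ℝ → ℝ → ℝ)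
    (huc : Continuous (fun p : ℝ × ℝ => u p.1 p.2))
    (t : ℝ) (ht : 0 ≤ t) :
    ∃ d : ℝ → ℝ,
      (∀ x : ℝ, HasDerivAt
        (fun x' => ∫ s in (0:ℝ)..t,
          Real.exp (s - t) * (convW1 J ρ (fun y => f (u y s)) x' + h x')) (d x) x) ∧
      ∀ x : ℝ, |d x| ≤
        (⨆ y, |f y|) * (∫ y, |deriv J y|) * (⨆ z, ρ z) + (⨆ z, |deriv h z|) := by
  have hk : Continuous (uncurry fun s y => f (u y s) * ρ y) :=
    (hfc.comp (huc.comp continuous_swap)).mul (hρcont.comp continuous_snd)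
  have hkC : ∀ s y, |f (u y s) * ρ y| ≤ (⨆ y, |f y|) * ⨆ z, ρ z := fun s y => by
    rw [abs_mul, abs_of_nonneg (hρpos y)]
    exact mul_le_mul (le_ciSup hfbdd _) (le_ciSup hρbdd y) (hρpos y)
      ((abs_nonneg _).trans (le_ciSup hfbdd 0))
  set w := fun y => ∫ s in (0 : ℝ)..t, exp (s - t) * (f (u y s) * ρ y)
  have hw : Continuous w :=
    intervalIntegral.continuous_parametric_intervalIntegral_of_continuous'
      ((continuous_exp.comp (continuous_snd.sub continuous_const)).mul
        (hk.comp continuous_swap)) 0 t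
  have hwC : ∀ y, |w y| ≤ (⨆ y, |f y|) * ⨆ z, ρ z := fun y =>
    abs_intervalIntegral_exp_sub_mul_le ht fun s => hkC s y
  have hv : (fun x => ∫ s in (0 : ℝ)..t, exp (s - t) * (convW1 J ρ (fun y => f (u y s)) x + h x))
      = fun x => (J ⋆[mul ℝ ℝ] w) x + (1 - exp (-t)) * h x := by
    ext x
    have hconv := continuous_convolution_mul_param hJint hk hkC x
    simp only [convW1_eq_convolution_mul, mul_add]
    rw [intervalIntegral.integral_add ((by fun_prop : Continuous _).intervalIntegrable _ _)
        ((by fun_prop : Continuous _).intervalIntegrable _ _),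
      intervalIntegral_mul_convolution_mul_param hJint hk hkC (by fun_prop) ht,
      intervalIntegral.integral_mul_const, integral_exp_sub]
  refine ⟨fun x => (deriv J ⋆[mul ℝ ℝ] w) x + (1 - exp (-t)) * deriv h x,
    fun x => ?_, fun x => ?_⟩
  · rw [hv]
    exact (hasDerivAt_convolution_mul (hJ1.differentiable one_ne_zero) hJint hJ'int hw hwC
      x).add ((hh1.differentiable one_ne_zero x).hasDerivAt.const_mul _)
  · calc _ ≤ |(deriv J ⋆[mul ℝ ℝ] w) x| + |1 - exp (-t)| * |deriv h x| :=
          (abs_add_le _ _).trans_eq (by rw [abs_mul])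
      _ ≤ (∫ y, |deriv J y|) * ((⨆ y, |f y|) * ⨆ z, ρ z) + 1 * ⨆ z, |deriv h z| :=
          add_le_add (abs_convolution_mul_le hJ'int hw.aestronglyMeasurable hwC x)
            (mul_le_mul (abs_one_sub_exp_neg_le_one ht) (le_ciSup hh'bdd x) (abs_nonneg _)
              zero_le_one)
      _ = _ := by ring

/-- N = 1: with `f` continuous bounded (`M = sup |f|`), `J` nonnegative
`C¹` with `J, J'` integrable, and `h` `C¹` with `h'` bounded, the Duhamel term
`v(x,t) = ∫₀^t e^{s-t} [(J *_ρ (f∘u(·,s)))(x) + h(x)] ds` is differentiable in `x` with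
`|∂ₓ v(x,t)| ≤ M ‖J'‖_{L¹} ‖ρ‖_∞ + ‖h'‖_∞` for all `x ∈ ℝ`, `t ≥ 0`. -/
theorem duhamel_term_derivative_bounded
    (J ρ h : ℝ → ℝ)
    (hJ1 : ContDiff ℝ 1 J) (hJint : Integrable J)
    (hJ'int : Integrable (deriv J)) (hJpos : ∀ x, 0 ≤ J x)
    (hρcont : Continuous ρ) (hρpos : ∀ x, 0 ≤ ρ x)
    (hρbdd : BddAbove (Set.range ρ)) (hρint : Integrable ρ)
    (hh1 : ContDiff ℝ 1 h) (hhbdd : BddAbove (Set.range fun x => |h x|))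
    (hh'bdd : BddAbove (Set.range fun x => |deriv h x|))
    (f : ℝ → ℝ) (hfc : Continuous f)
    (hfbdd : BddAbove (Set.range fun y => |f y|))
    (u : ℝ → ℝ → ℝ)
    (huc : Continuous (fun p : ℝ × ℝ => u p.1 p.2))
    (t : ℝ) (ht : 0 ≤ t) :
    ∃ d : ℝ → ℝ,
      (∀ x : ℝ, HasDerivAt
        (fun x' => ∫ s in (0:ℝ)..t,
          Real.exp (s - t) * (convW1 J ρ (fun y => f (u y s)) x' + h x')) (d x) x) ∧
      ∀ x : ℝ, |d x| ≤
        (⨆ y, |f y|) * (∫ y, |deriv J y|) * (⨆ z, ρ z) + (⨆ z, |deriv h z|) :=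
  duhamel_term_derivative_bounded_general J ρ h hJ1 hJint hJ'int hρcont hρpos hρbdd hh1 hh'bdd f hfc
    hfbdd u huc t ht
end
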